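/- Let R_{α₁}, R_{α₂} be the n×n correlation matrices of the Matérn covariance K_{α,ν} at distinct points s₁,…,sₙ in ℝ^d (d ∈ {1,2,3}), with 0 < α₁ < α₂. Then the matrix α₁^{−2ν} R_{α₁} − α₂^{−2ν} R_{α₂} is positive definite; consequently for every vector x ∈ ℝⁿ, α₂^{2ν} xᵀ R_{α₂}^{−1} x > α₁^{2ν} xᵀ R_{α₁}^{−1} x, and det(α₂^{2ν} R_{α₂}^{−1}) > det(α₁^{2ν} R_{α₁}^{−1}). -/

import Mathlib

/-!
The quadratic form of `R_α` is `xᵀ R_α x = ∫ |∑ᵢ xᵢ e^{i⟪ω, sᵢ⟫}|² f_α(ω) dω`. The rescaled Matérn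
densities `α^{-2ν} f_α = c (α² + ‖ω‖²)^{-(ν + d/2)}` decrease strictly in `α`, so
`α₁^{-2ν} R_{α₁} - α₂^{-2ν} R_{α₂}` has the same form with a strictly positive density. Such a
quadratic form vanishes only if the exponential sum vanishes a.e., which would also make
`xᵀ R_{α₁} x` vanish. For `B > 0` and `A - B > 0`, the inverses satisfy `xᵀ A⁻¹ x < xᵀ B⁻¹ x`, and
`det A = det B · det (1 + B^{-1/2} (A - B) B^{-1/2}) > det B`.
-/

open MeasureTheory Matrix Real Module
open scoped InnerProductSpace

namespace Matrix

variable {n : Type*} [Fintype n] {A B : Matrix n n ℝ}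

lemma IsHermitian.dotProduct_mulVec_comm (hB : B.IsHermitian) (u v : n → ℝ) :
    u ⬝ᵥ B *ᵥ v = v ⬝ᵥ B *ᵥ u := by
  rw [dotProduct_mulVec, ← mulVec_transpose, ← conjTranspose_eq_transpose_of_trivial, hB.eq,
    dotProduct_comm]

variable [DecidableEq n]

lemma PosDef.two_mul_dotProduct_sub_le (hB : B.PosDef) (x y : n → ℝ) :
    2 * (x ⬝ᵥ y) - y ⬝ᵥ B *ᵥ y ≤ x ⬝ᵥ B⁻¹ *ᵥ x := by
  have hBB : B *ᵥ B⁻¹ *ᵥ x = x := by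
    rw [mulVec_mulVec, mul_nonsing_inv _ (isUnit_iff_ne_zero.mpr hB.det_pos.ne'), one_mulVec]
  have hsq := hB.posSemidef.dotProduct_mulVec_nonneg (y - B⁻¹ *ᵥ x)
  simp only [star_trivial, mulVec_sub, dotProduct_sub, sub_dotProduct, hBB] at hsq
  rw [hB.isHermitian.dotProduct_mulVec_comm (B⁻¹ *ᵥ x), hBB, dotProduct_comm (B⁻¹ *ᵥ x) x,
    dotProduct_comm y x] at hsq
  linarith

lemma dotProduct_inv_mulVec_lt_of_posDef_sub (hB : B.PosDef) (hAB : (A - B).PosDef)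
    {x : n → ℝ} (hx : x ≠ 0) : x ⬝ᵥ A⁻¹ *ᵥ x < x ⬝ᵥ B⁻¹ *ᵥ x := by
  have hA : A.PosDef := by simpa using hB.add hAB
  set y := A⁻¹ *ᵥ x
  have hAy : A *ᵥ y = x := by
    rw [mulVec_mulVec, mul_nonsing_inv _ (isUnit_iff_ne_zero.mpr hA.det_pos.ne'), one_mulVec]
  have hy : y ≠ 0 := by rintro h; simp [h, eq_comm, hx] at hAy
  have hgap : y ⬝ᵥ B *ᵥ y < y ⬝ᵥ A *ᵥ y := by
    have := hAB.dotProduct_mulVec_pos hy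
    rw [star_trivial, sub_mulVec, dotProduct_sub] at this
    linarith
  have hxy : x ⬝ᵥ y = y ⬝ᵥ A *ᵥ y := by rw [← hAy, dotProduct_comm]
  -- `x ⬝ᵥ A⁻¹ *ᵥ x = 2 x ⬝ᵥ y - y ⬝ᵥ A *ᵥ y`, and the same expression with `B` is bounded
  -- by `x ⬝ᵥ B⁻¹ *ᵥ x`
  linarith [hB.two_mul_dotProduct_sub_le x y]

lemma PosDef.one_lt_det_one_add [Nonempty n] {C : Matrix n n ℝ} (hC : C.PosDef) :
    1 < (1 + C).det := by
  set U := hC.isHermitian.eigenvectorUnitary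
  have h1C : 1 + C = Unitary.conjStarAlgAut ℝ _ U
      (diagonal fun i => 1 + hC.isHermitian.eigenvalues i) := by
    conv_lhs => rw [hC.isHermitian.spectral_theorem]
    rw [← map_one (Unitary.conjStarAlgAut ℝ _ U), ← map_add, ← diagonal_one, diagonal_add]
    rfl
  rw [h1C, Unitary.conjStarAlgAut_apply, det_mul, det_mul, mul_right_comm, ← det_mul,
    Unitary.mul_star_self_of_mem U.2, det_one, one_mul, det_diagonal]
  simpa using Finset.prod_lt_prod_of_nonempty (fun _ _ => one_pos)
    (fun i _ => lt_add_of_pos_right 1 (hC.eigenvalues_pos i)) Finset.univ_nonempty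

open scoped MatrixOrder in
lemma det_lt_det_of_posDef_sub [Nonempty n] (hB : B.PosDef) (hAB : (A - B).PosDef) :
    B.det < A.det := by
  set S := CFC.sqrt B
  have hS : S.IsHermitian := (CFC.sqrt_nonneg B).posSemidef.isHermitian
  have hSS : S * S = B := CFC.sqrt_mul_sqrt_self B hB.posSemidef.nonneg
  have hSu : IsUnit S := (CFC.isUnit_sqrt_iff B hB.posSemidef.nonneg).mpr hB.isUnit
  have hSdet : IsUnit S.det := (isUnit_iff_isUnit_det S).mp hSu
  set C := S⁻¹ * (A - B) * S⁻¹
  have hC : C.PosDef := by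
    have := (IsUnit.posDef_star_left_conjugate_iff (isUnit_nonsing_inv_iff.mpr hSu)).mpr hAB
    rwa [star_eq_conjTranspose, conjTranspose_nonsing_inv, hS.eq] at this
  have hA : A = S * (1 + C) * S := by
    rw [mul_add, add_mul, mul_one, hSS, ← mul_assoc, ← mul_assoc, mul_nonsing_inv _ hSdet,
      one_mul, mul_assoc, nonsing_inv_mul _ hSdet, mul_one, add_sub_cancel]
  have hdet : A.det = B.det * (1 + C).det := by
    conv_lhs => rw [hA]
    rw [det_mul, det_mul, mul_right_comm, ← det_mul, hSS]
  rw [hdet]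
  exact lt_mul_of_one_lt_right hB.det_pos hC.one_lt_det_one_add

end Matrix

section Spectral

variable {E ι : Type*} [NormedAddCommGroup E] [InnerProductSpace ℝ E]

section ExpSum

variable [Fintype ι] (s : ι → E) (x : ι → ℝ)

/-- `|∑ᵢ xᵢ exp(i⟪ω, sᵢ⟫)|²`, written in real form. -/
noncomputable def expSumNormSq (ω : E) : ℝ :=
  (∑ i, x i * cos ⟪ω, s i⟫_ℝ) ^ 2 + (∑ i, x i * sin ⟪ω, s i⟫_ℝ) ^ 2

lemma expSumNormSq_nonneg (ω : E) : 0 ≤ expSumNormSq s x ω := by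
  unfold expSumNormSq; positivity

lemma expSumNormSq_le (ω : E) : expSumNormSq s x ω ≤ 2 * (∑ i, |x i|) ^ 2 := by
  have key : ∀ u : ι → ℝ, (∀ i, |u i| ≤ 1) → (∑ i, x i * u i) ^ 2 ≤ (∑ i, |x i|) ^ 2 := by
    intro u hu
    rw [← sq_abs]
    refine pow_le_pow_left₀ (abs_nonneg _) ?_ 2
    refine (Finset.abs_sum_le_sum_abs _ _).trans (Finset.sum_le_sum fun i _ => ?_)
    rw [abs_mul]
    exact mul_le_of_le_one_right (abs_nonneg _) (hu i)
  have hcos := key (fun i => cos ⟪ω, s i⟫_ℝ) fun i => abs_cos_le_one _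
  have hsin := key (fun i => sin ⟪ω, s i⟫_ℝ) fun i => abs_sin_le_one _
  unfold expSumNormSq
  linarith

@[fun_prop]
lemma continuous_expSumNormSq : Continuous (expSumNormSq s x) := by
  unfold expSumNormSq; fun_prop

lemma expSumNormSq_eq_sum_cos (ω : E) :
    expSumNormSq s x ω = ∑ i, ∑ j, x i * x j * cos ⟪ω, s i - s j⟫_ℝ := by
  simp only [expSumNormSq, sq, Finset.sum_mul_sum, ← Finset.sum_add_distrib, inner_sub_right,
    cos_sub]
  exact Finset.sum_congr rfl fun i _ => Finset.sum_congr rfl fun j _ => by ring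

end ExpSum

variable [MeasurableSpace E] {μ : Measure E} {w w₀ w₁ w₂ : E → ℝ} {s : ι → E}

noncomputable def spectralMatrix (μ : Measure E) (w : E → ℝ) (s : ι → E) : Matrix ι ι ℝ :=
  Matrix.of fun i j => ∫ ω, cos ⟪ω, s i - s j⟫_ℝ * w ω ∂μ

lemma spectralMatrix_isHermitian : (spectralMatrix μ w s).IsHermitian := by
  ext i j
  simp only [spectralMatrix, conjTranspose_apply, of_apply, star_trivial]
  congr 1 with ω
  rw [← neg_sub, inner_neg_right, cos_neg]

lemma spectralMatrix_smul (c : ℝ) : spectralMatrix μ (c • w) s = c • spectralMatrix μ w s := by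
  ext i j
  simp only [spectralMatrix, of_apply, Matrix.smul_apply, Pi.smul_apply, smul_eq_mul,
    ← integral_const_mul]
  congr 1 with ω
  ring

variable [OpensMeasurableSpace E]

lemma integrable_cos_inner_mul (hw : Integrable w μ) (v : E) :
    Integrable (fun ω => cos ⟪ω, v⟫_ℝ * w ω) μ :=
  hw.bdd_mul (by fun_prop : Continuous fun ω => cos ⟪ω, v⟫_ℝ).aestronglyMeasurable
    (ae_of_all _ fun ω => by simpa using abs_cos_le_one _)

lemma spectralMatrix_sub (hw₁ : Integrable w₁ μ) (hw₂ : Integrable w₂ μ) :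
    spectralMatrix μ (w₁ - w₂) s = spectralMatrix μ w₁ s - spectralMatrix μ w₂ s := by
  ext i j
  simp only [spectralMatrix, of_apply, Matrix.sub_apply, Pi.sub_apply, mul_sub]
  exact integral_sub (integrable_cos_inner_mul hw₁ _) (integrable_cos_inner_mul hw₂ _)

variable [Fintype ι]

lemma integrable_expSumNormSq_mul (x : ι → ℝ) (hw : Integrable w μ) :
    Integrable (fun ω => expSumNormSq s x ω * w ω) μ :=
  hw.bdd_mul (continuous_expSumNormSq s x).aestronglyMeasurable
    (ae_of_all _ fun ω => by
      rw [norm_of_nonneg (expSumNormSq_nonneg s x ω)]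
      exact expSumNormSq_le s x ω)

lemma dotProduct_spectralMatrix_mulVec (x : ι → ℝ) (hw : Integrable w μ) :
    x ⬝ᵥ spectralMatrix μ w s *ᵥ x = ∫ ω, expSumNormSq s x ω * w ω ∂μ := by
  have hint : ∀ i j, Integrable (fun ω => x i * x j * (cos ⟪ω, s i - s j⟫_ℝ * w ω)) μ :=
    fun i j => (integrable_cos_inner_mul hw _).const_mul _
  simp_rw [expSumNormSq_eq_sum_cos, Finset.sum_mul, mul_assoc (x _ * x _)]
  rw [integral_finsetSum _ fun i _ => integrable_finsetSum _ fun j _ => hint i j]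
  simp_rw [integral_finsetSum _ fun j _ => hint _ j, integral_const_mul]
  simp only [dotProduct, mulVec, spectralMatrix, of_apply, Finset.mul_sum]
  exact Finset.sum_congr rfl fun i _ => Finset.sum_congr rfl fun j _ => by ring

lemma posDef_spectralMatrix_of_pos (hw₀ : Integrable w₀ μ)
    (h₀ : (spectralMatrix μ w₀ s).PosDef) (hw : Integrable w μ) (hpos : ∀ ω, 0 < w ω) :
    (spectralMatrix μ w s).PosDef := by
  refine .of_dotProduct_mulVec_pos spectralMatrix_isHermitian fun x hx => ?_
  rw [star_trivial, dotProduct_spectralMatrix_mulVec x hw]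
  have hnonneg : 0 ≤ fun ω => expSumNormSq s x ω * w ω :=
    fun ω => mul_nonneg (expSumNormSq_nonneg s x ω) (hpos ω).le
  refine (integral_nonneg hnonneg).lt_of_ne' fun h0 => ?_
  -- A vanishing integral with `w > 0` kills the exponential sum a.e., hence also the
  -- quadratic form of `spectralMatrix μ w₀ s`.
  have hzero : expSumNormSq s x =ᵐ[μ] 0 := by
    filter_upwards [(integral_eq_zero_iff_of_nonneg hnonneg
      (integrable_expSumNormSq_mul x hw)).mp h0] with ω hω
    exact (mul_eq_zero.mp hω).resolve_right (hpos ω).ne'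
  have h₀x := h₀.dotProduct_mulVec_pos hx
  rw [star_trivial, dotProduct_spectralMatrix_mulVec x hw₀, integral_eq_zero_of_ae] at h₀x
  · exact h₀x.false
  · filter_upwards [hzero] with ω hω
    simp [hω]

end Spectral

section Matern

variable {ν d a r : ℝ}

noncomputable def maternSpectralDensity (ν d a r : ℝ) : ℝ :=
  Gamma (ν + d / 2) / Gamma ν * a ^ (2 * ν) / (π ^ (d / 2) * (a ^ 2 + r ^ 2) ^ (ν + d / 2))

noncomputable def maternConst (ν d : ℝ) : ℝ :=
  Gamma (ν + d / 2) / (Gamma ν * π ^ (d / 2))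

lemma maternConst_pos (hν : 0 < ν) (hd : 0 ≤ d) : 0 < maternConst ν d := by
  have := Gamma_pos_of_pos (by positivity : 0 < ν + d / 2)
  have := Gamma_pos_of_pos hν
  have := rpow_pos_of_pos pi_pos (d / 2)
  unfold maternConst
  positivity

lemma maternSpectralDensity_eq (ha : 0 < a) :
    maternSpectralDensity ν d a r =
      maternConst ν d * a ^ (2 * ν) * (a ^ 2 + r ^ 2) ^ (-(ν + d / 2)) := by
  rw [maternSpectralDensity, maternConst, rpow_neg (by positivity)]
  field_simp

lemma maternSpectralDensity_pos (hν : 0 < ν) (hd : 0 ≤ d) (ha : 0 < a) :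
    0 < maternSpectralDensity ν d a r := by
  have := maternConst_pos hν hd
  rw [maternSpectralDensity_eq ha]
  positivity

lemma rpow_neg_mul_maternSpectralDensity (ha : 0 < a) :
    a ^ (-(2 * ν)) * maternSpectralDensity ν d a r =
      maternConst ν d * (a ^ 2 + r ^ 2) ^ (-(ν + d / 2)) := by
  rw [maternSpectralDensity_eq ha, ← mul_assoc, mul_left_comm, ← rpow_add ha, neg_add_cancel,
    rpow_zero, mul_one]

lemma rpow_neg_mul_maternSpectralDensity_lt (hν : 0 < ν) (hd : 0 ≤ d) {α₁ α₂ : ℝ}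
    (hα₁ : 0 < α₁) (hα : α₁ < α₂) :
    α₂ ^ (-(2 * ν)) * maternSpectralDensity ν d α₂ r <
      α₁ ^ (-(2 * ν)) * maternSpectralDensity ν d α₁ r := by
  rw [rpow_neg_mul_maternSpectralDensity (hα₁.trans hα), rpow_neg_mul_maternSpectralDensity hα₁]
  refine mul_lt_mul_of_pos_left (rpow_lt_rpow_of_neg (by positivity) ?_ (by linarith))
    (maternConst_pos hν hd)
  nlinarith

variable {E ι : Type*} [NormedAddCommGroup E] [InnerProductSpace ℝ E] [MeasurableSpace E]

noncomputable def maternMatrix (μ : Measure E) (ν a : ℝ) (s : ι → E) : Matrix ι ι ℝ :=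
  spectralMatrix μ (fun ω => maternSpectralDensity ν (finrank ℝ E) a ‖ω‖) s

variable [FiniteDimensional ℝ E] [BorelSpace E] {μ : Measure E} [μ.IsAddHaarMeasure]

lemma integrable_rpow_neg_sq_add_norm_sq {p : ℝ} (ha : a ≠ 0) (hp : finrank ℝ E < 2 * p) :
    Integrable (fun ω : E => (a ^ 2 + ‖ω‖ ^ 2) ^ (-p)) μ := by
  have h := ((integrable_rpow_neg_one_add_norm_sq (μ := μ) hp).comp_smul
    (inv_ne_zero ha)).const_mul ((a ^ 2) ^ (-p))
  refine h.congr (ae_of_all _ fun ω => ?_)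
  have ha2 : 0 < a ^ 2 := by positivity
  simp only
  rw [neg_div, mul_div_cancel_left₀ p two_ne_zero, ← mul_rpow ha2.le (by positivity), norm_smul,
    mul_pow, norm_inv, Real.norm_eq_abs, inv_pow, sq_abs]
  congr 1
  field_simp

lemma integrable_maternSpectralDensity (hν : 0 < ν) (ha : 0 < a) :
    Integrable (fun ω : E => maternSpectralDensity ν (finrank ℝ E) a ‖ω‖) μ := by
  simp_rw [maternSpectralDensity_eq ha]
  exact (integrable_rpow_neg_sq_add_norm_sq ha.ne' (by linarith)).const_mul _

variable [Fintype ι] {s : ι → E} {α₁ α₂ : ℝ}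

lemma posDef_maternMatrix_of_posDef (hν : 0 < ν) (hα₁ : 0 < α₁)
    (h₁ : (maternMatrix μ ν α₁ s).PosDef) (ha : 0 < a) : (maternMatrix μ ν a s).PosDef :=
  posDef_spectralMatrix_of_pos (integrable_maternSpectralDensity hν hα₁) h₁
    (integrable_maternSpectralDensity hν ha)
    fun _ => maternSpectralDensity_pos hν (Nat.cast_nonneg _) ha

lemma posDef_rpow_neg_smul_maternMatrix_sub (hν : 0 < ν) (hα₁ : 0 < α₁) (hα : α₁ < α₂)
    (h₁ : (maternMatrix μ ν α₁ s).PosDef) :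
    (α₁ ^ (-(2 * ν)) • maternMatrix μ ν α₁ s - α₂ ^ (-(2 * ν)) • maternMatrix μ ν α₂ s).PosDef := by
  have hint₁ := (integrable_maternSpectralDensity (μ := μ) hν hα₁).smul (α₁ ^ (-(2 * ν)))
  have hint₂ := (integrable_maternSpectralDensity (μ := μ) hν (hα₁.trans hα)).smul
    (α₂ ^ (-(2 * ν)))
  rw [maternMatrix, maternMatrix, ← spectralMatrix_smul, ← spectralMatrix_smul,
    ← spectralMatrix_sub hint₁ hint₂]
  exact posDef_spectralMatrix_of_pos (integrable_maternSpectralDensity hν hα₁) h₁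
    (hint₁.sub hint₂) fun _ => sub_pos.mpr <|
      rpow_neg_mul_maternSpectralDensity_lt hν (Nat.cast_nonneg _) hα₁ hα

end Matern

theorem stmt7_general (d n : ℕ) (hn : 0 < n) (ν : ℝ) (hν : 0 < ν)
    (s : Fin n → EuclideanSpace ℝ (Fin d))
    (α₁ α₂ : ℝ) (hα₁ : 0 < α₁) (hα : α₁ < α₂)
    (f : ℝ → EuclideanSpace ℝ (Fin d) → ℝ)
    (hf : ∀ a ω, f a ω = Real.Gamma (ν + (d : ℝ) / 2) / Real.Gamma ν * a ^ (2 * ν) /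
        (Real.pi ^ ((d : ℝ) / 2) * (a ^ 2 + ‖ω‖ ^ 2) ^ (ν + (d : ℝ) / 2)))
    (R : ℝ → Matrix (Fin n) (Fin n) ℝ)
    (hR : ∀ a i j, R a i j = ∫ ω, Real.cos ((inner ℝ ω (s i - s j) : ℝ)) * f a ω)
    (hR₁ : (R α₁).PosDef) :
    (α₁ ^ (-(2 * ν)) • R α₁ - α₂ ^ (-(2 * ν)) • R α₂).PosDef ∧
    (∀ x : Fin n → ℝ, x ≠ 0 →
      α₁ ^ (2 * ν) * (x ⬝ᵥ (R α₁)⁻¹ *ᵥ x) < α₂ ^ (2 * ν) * (x ⬝ᵥ (R α₂)⁻¹ *ᵥ x)) ∧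
    (α₁ ^ (2 * ν) • (R α₁)⁻¹).det < (α₂ ^ (2 * ν) • (R α₂)⁻¹).det := by
  have hα₂ : 0 < α₂ := hα₁.trans hα
  have hRM : ∀ a, R a = maternMatrix volume ν a s := fun a => Matrix.ext fun i j => by
    rw [hR, maternMatrix, spectralMatrix, of_apply, finrank_euclideanSpace_fin]
    simp only [hf]
    rfl
  have hR₂ : (R α₂).PosDef := by
    rw [hRM] at hR₁ ⊢
    exact posDef_maternMatrix_of_posDef hν hα₁ hR₁ hα₂
  have hdiff : (α₁ ^ (-(2 * ν)) • R α₁ - α₂ ^ (-(2 * ν)) • R α₂).PosDef := by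
    simp only [hRM] at hR₁ ⊢
    exact posDef_rpow_neg_smul_maternMatrix_sub hν hα₁ hα hR₁
  have hinv : ∀ a, 0 < a → (R a).PosDef → (a ^ (-(2 * ν)) • R a)⁻¹ = a ^ (2 * ν) • (R a)⁻¹ :=
    fun a ha hRa => inv_eq_left_inv <| by
      rw [Matrix.smul_mul, Matrix.mul_smul, smul_smul,
        nonsing_inv_mul _ (isUnit_iff_ne_zero.mpr hRa.det_pos.ne'), ← rpow_add ha,
        add_neg_cancel, rpow_zero, one_smul]
  have hB := hR₂.smul (rpow_pos_of_pos hα₂ (-(2 * ν)))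
  refine ⟨hdiff, fun x hx => ?_, ?_⟩
  · simpa only [hinv α₁ hα₁ hR₁, hinv α₂ hα₂ hR₂, smul_mulVec, dotProduct_smul, smul_eq_mul] using
      dotProduct_inv_mulVec_lt_of_posDef_sub hB hdiff hx
  · have : Nonempty (Fin n) := Fin.pos_iff_nonempty.mp hn
    rw [← hinv α₁ hα₁ hR₁, ← hinv α₂ hα₂ hR₂, det_nonsing_inv, det_nonsing_inv,
      Ring.inverse_eq_inv, Ring.inverse_eq_inv]
    exact inv_strictAnti₀ hB.det_pos (det_lt_det_of_posDef_sub hB hdiff)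

/-- Let `R α` be the Matérn correlation matrix at `n` distinct points in `ℝ^d`
(`d ∈ {1,2,3}`), characterized spectrally by
`(R α)ᵢⱼ = ∫ cos(⟨ω, sᵢ − sⱼ⟩) f α ω dω` with `f α` the Matérn spectral density.
For `0 < α₁ < α₂`, the matrix `α₁^{−2ν} R α₁ − α₂^{−2ν} R α₂` is positive definite;
consequently for every nonzero `x`, `α₂^{2ν} xᵀR_{α₂}⁻¹x > α₁^{2ν} xᵀR_{α₁}⁻¹x`, and
`det(α₂^{2ν}R_{α₂}⁻¹) > det(α₁^{2ν}R_{α₁}⁻¹)`. -/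
theorem stmt7 (d n : ℕ) (hd : d = 1 ∨ d = 2 ∨ d = 3) (hn : 0 < n) (ν : ℝ) (hν : 0 < ν)
    (s : Fin n → EuclideanSpace ℝ (Fin d)) (hs : Function.Injective s)
    (α₁ α₂ : ℝ) (hα₁ : 0 < α₁) (hα : α₁ < α₂)
    (f : ℝ → EuclideanSpace ℝ (Fin d) → ℝ)
    (hf : ∀ a ω, f a ω = Real.Gamma (ν + (d : ℝ) / 2) / Real.Gamma ν * a ^ (2 * ν) /
        (Real.pi ^ ((d : ℝ) / 2) * (a ^ 2 + ‖ω‖ ^ 2) ^ (ν + (d : ℝ) / 2)))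
    (R : ℝ → Matrix (Fin n) (Fin n) ℝ)
    (hR : ∀ a i j, R a i j = ∫ ω, Real.cos ((inner ℝ ω (s i - s j) : ℝ)) * f a ω)
    (hR₁ : (R α₁).PosDef) (hR₂ : (R α₂).PosDef) :
    (α₁ ^ (-(2 * ν)) • R α₁ - α₂ ^ (-(2 * ν)) • R α₂).PosDef ∧
    (∀ x : Fin n → ℝ, x ≠ 0 →
      α₁ ^ (2 * ν) * (x ⬝ᵥ (R α₁)⁻¹ *ᵥ x) < α₂ ^ (2 * ν) * (x ⬝ᵥ (R α₂)⁻¹ *ᵥ x)) ∧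
    (α₁ ^ (2 * ν) • (R α₁)⁻¹).det < (α₂ ^ (2 * ν) • (R α₂)⁻¹).det :=
  stmt7_general d n hn ν hν s α₁ α₂ hα₁ hα f hf R hR hR₁
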